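/- Let M be a loopless matroid on a finite ground set E and let ω ∈ ℝ^E. Then for every e ∈ E, the subdominant M-ultrametric satisfies ω^M_e = min of the finite set {ω_e} ∪ { max_{f ∈ C \ {e}} ω_f : C a circuit of M with e ∈ C }. (The 'red rule' computes the subdominant M-ultrametric.) -/

import Mathlib

open scoped Classical

variable {α : Type*}

/-- The ω-weight of a set of elements: the sum of ω over the set. -/
noncomputable def wSum (ω : α → ℝ) (B : Set α) : ℝ := ∑ᶠ e ∈ B, ω e

/-- `B` is an ω-minimum basis of `M`: a basis whose ω-weight is minimum among all bases. -/
def IsMinBase [Fintype α] (M : Matroid α) (ω : α → ℝ) (B : Set α) : Prop :=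
  M.IsBase B ∧ ∀ B' : Set α, M.IsBase B' → wSum ω B ≤ wSum ω B'

/-- `ω` lies in the Bergman fan of `M`: every element lies in some ω-minimum basis. -/
def InBergmanFan [Fintype α] (M : Matroid α) (ω : α → ℝ) : Prop :=
  ∀ e : α, ∃ B : Set α, IsMinBase M ω B ∧ e ∈ B

/-- `C` is a circuit of `M`: a minimal dependent set. -/
def IsCircuit (M : Matroid α) (C : Set α) : Prop := Minimal M.Dep C

/-- A cocircuit of `M` is a circuit of the dual matroid `M✶`. -/
def IsCocircuit (M : Matroid α) (C : Set α) : Prop := IsCircuit M✶ C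

/-!
The weights in the Bergman fan are exactly those whose maximum on every circuit is attained
at least twice: exchange an element of an ω-minimum basis against another element of a circuit,
or complete a fundamental circuit of an ω-minimum basis. If `u ≤ ω` has this property and
`e ∈ C`, then `u e ≤ u f ≤ ω f` for some `f ∈ C \ {e}`, so `u` lies below the red-rule value.
Conversely the red rule `r` itself has the property: if `x` were the strict maximum of `r` on a
circuit `C`, all of `C \ {x}`, hence `x`, would lie in the closure of `F = {f | ω f < r x}`, and
a circuit through `x` inside `F ∪ {x}` would force `r x` below itself.
-/

section

open Set Matroid

variable {M : Matroid α} {ω u : α → ℝ} {B C : Set α} {e x f : α}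

lemma wSum_insert_sdiff [Finite α] (hx : x ∈ B) (hf : f ∉ B) :
    wSum ω (insert f B \ {x}) = wSum ω B + ω f - ω x := by
  have hfx : f ≠ x := by rintro rfl; exact hf hx
  have hB : wSum ω B = ω x + wSum ω (B \ {x}) := by
    have h := finsum_mem_insert ω (fun h => h.2 rfl : x ∉ B \ {x}) (toFinite _)
    rwa [insert_sdiff_singleton, insert_eq_of_mem hx] at h
  have hB' : wSum ω (insert f (B \ {x})) = ω f + wSum ω (B \ {x}) :=
    finsum_mem_insert ω (fun h => hf h.1) (toFinite _)
  rw [← insert_sdiff_singleton_comm hfx, hB', hB]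
  ring

lemma exists_isMinBase [Fintype α] (M : Matroid α) (ω : α → ℝ) : ∃ B, IsMinBase M ω B :=
  exists_min_image {B | M.IsBase B} (wSum ω) (toFinite _) M.exists_isBase

lemma InBergmanFan.ground_eq_univ [Fintype α] (h : InBergmanFan M u) : M.E = univ :=
  eq_univ_of_forall fun e => let ⟨_, hB, heB⟩ := h e; hB.1.subset_ground heB

lemma InBergmanFan.loopless [Fintype α] (h : InBergmanFan M u) : M.Loopless :=
  loopless_iff_forall_isNonloop.2 fun e _ =>
    let ⟨_, hB, heB⟩ := h e
    indep_singleton.1 (hB.1.indep.subset (singleton_subset_iff.2 heB))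

lemma InBergmanFan.exists_le_of_mem_isCircuit [Fintype α] (h : InBergmanFan M u)
    (hC : M.IsCircuit C) (hx : x ∈ C) : ∃ f ∈ C \ {x}, u x ≤ u f := by
  obtain ⟨B, ⟨hB, hmin⟩, hxB⟩ := h x
  obtain ⟨f, hfC, hfcl⟩ : ∃ f ∈ C \ {x}, f ∉ M.closure (B \ {x}) := by
    by_contra! hsub
    exact hB.indep.notMem_closure_sdiff_of_mem hxB
      (M.closure_subset_closure_of_subset_closure hsub (hC.mem_closure_sdiff_singleton_of_mem hx))
  have hfB : f ∉ B := fun hfB => hfcl (M.mem_closure_of_mem' ⟨hfB, hfC.2⟩ (hB.subset_ground hfB))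
  have hB' := hB.exchange_base_of_notMem_closure hxB hfcl (hC.subset_ground hfC.1)
  rw [insert_sdiff_singleton_comm hfC.2] at hB'
  have hw := hmin _ hB'
  rw [wSum_insert_sdiff hxB hfB] at hw
  exact ⟨f, hfC, by linarith⟩

lemma inBergmanFan_of_forall_isCircuit [Fintype α] (hE : M.E = univ)
    (h : ∀ C, M.IsCircuit C → ∀ x ∈ C, ∃ f ∈ C \ {x}, u x ≤ u f) : InBergmanFan M u := by
  obtain ⟨B, hB, hmin⟩ := exists_isMinBase M u
  intro x
  by_cases hxB : x ∈ B
  · exact ⟨B, ⟨hB, hmin⟩, hxB⟩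
  have hC := hB.fundCircuit_isCircuit (hE ▸ mem_univ x) hxB
  obtain ⟨f, hfC, hle⟩ := h _ hC x (M.mem_fundCircuit x B)
  have hCB := M.fundCircuit_subset_insert x B
  have hfB : f ∈ B := (hCB hfC.1).resolve_left hfC.2
  have hB' : M.IsBase (insert x B \ {f}) :=
    hB.isBase_insert_sdiff_of_mem_closure
      (M.closure_subset_closure (sdiff_subset_sdiff_left hCB)
        (hC.mem_closure_sdiff_singleton_of_mem hfC.1))
      (mem_insert_of_mem _ hfB)
  refine ⟨_, ⟨hB', fun B'' hB'' => ?_⟩, mem_insert x B, fun h => hfC.2 h.symm⟩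
  rw [wSum_insert_sdiff hfB hxB]
  linarith [hmin B'' hB'']

def redRuleValues (M : Matroid α) (ω : α → ℝ) (e : α) : Set ℝ :=
  insert (ω e) {r | ∃ C, M.IsCircuit C ∧ e ∈ C ∧ r = sSup (ω '' (C \ {e}))}

noncomputable def redRule (M : Matroid α) (ω : α → ℝ) (e : α) : ℝ :=
  sInf (redRuleValues M ω e)

lemma redRuleValues_finite [Finite α] : (redRuleValues M ω e).Finite :=
  ((finite_range fun C : Set α => sSup (ω '' (C \ {e}))).subset
    (by rintro r ⟨C, -, -, rfl⟩; exact ⟨C, rfl⟩)).insert _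

lemma redRule_mem [Finite α] : redRule M ω e ∈ redRuleValues M ω e :=
  Nonempty.csInf_mem ⟨_, mem_insert _ _⟩ redRuleValues_finite

lemma redRule_le_self [Finite α] : redRule M ω e ≤ ω e :=
  csInf_le redRuleValues_finite.bddBelow (mem_insert _ _)

lemma redRule_le_sSup [Finite α] (hC : M.IsCircuit C) (he : e ∈ C) :
    redRule M ω e ≤ sSup (ω '' (C \ {e})) :=
  csInf_le redRuleValues_finite.bddBelow (mem_insert_of_mem _ ⟨C, hC, he, rfl⟩)

lemma le_redRule_of_forall_isCircuit {r : ℝ} (hr : r ≤ ω e)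
    (hC : ∀ C, M.IsCircuit C → e ∈ C → r ≤ sSup (ω '' (C \ {e}))) : r ≤ redRule M ω e :=
  le_csInf ⟨_, mem_insert _ _⟩ (by rintro r (rfl | ⟨C, hC', he, rfl⟩); exacts [hr, hC C hC' he])

lemma mem_closure_of_redRule_lt [Finite α] (hE : M.E = univ) {t : ℝ} (h : redRule M ω e < t) :
    e ∈ M.closure {f | ω f < t} := by
  rcases redRule_mem (M := M) (ω := ω) (e := e) with h' | ⟨C, hC, heC, h'⟩
  · exact M.mem_closure_of_mem' (show ω e < t from h' ▸ h) (hE ▸ mem_univ e)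
  · refine M.closure_subset_closure (fun f hf => ?_) (hC.mem_closure_sdiff_singleton_of_mem heC)
    calc ω f ≤ sSup (ω '' (C \ {e})) :=
          le_csSup ((toFinite _).image ω).bddAbove (mem_image_of_mem ω hf)
      _ = redRule M ω e := h'.symm
      _ < t := h

lemma redRule_exists_le_of_mem_isCircuit [Finite α] [M.Loopless] (hE : M.E = univ)
    (hC : M.IsCircuit C) (hx : x ∈ C) : ∃ f ∈ C \ {x}, redRule M ω x ≤ redRule M ω f := by
  by_contra! hlt
  set F := {f | ω f < redRule M ω x}
  have hxF : x ∉ F := redRule_le_self.not_gt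
  have hxcl : x ∈ M.closure F :=
    M.closure_subset_closure_of_subset_closure (fun f hf => mem_closure_of_redRule_lt hE (hlt f hf))
      (hC.mem_closure_sdiff_singleton_of_mem hx)
  obtain ⟨C', hC'F, hC', hxC'⟩ := exists_isCircuit_of_mem_closure hxcl hxF
  obtain ⟨y, hy, hyx⟩ := (loopless_iff_forall_isCircuit.1 ‹_› C' hC').exists_ne x
  have hne : (ω '' (C' \ {x})).Nonempty := ⟨ω y, y, ⟨hy, hyx⟩, rfl⟩
  have hlt' : sSup (ω '' (C' \ {x})) < redRule M ω x :=
    (((toFinite _).image ω).csSup_lt_iff hne).2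
      (forall_mem_image.2 fun f hf => (hC'F hf.1).resolve_left hf.2)
  exact (redRule_le_sSup hC' hxC').not_gt hlt'

lemma inBergmanFan_redRule [Fintype α] [M.Loopless] (hE : M.E = univ) :
    InBergmanFan M (redRule M ω) :=
  inBergmanFan_of_forall_isCircuit hE fun _ hC _ hx => redRule_exists_le_of_mem_isCircuit hE hC hx

lemma InBergmanFan.le_redRule [Fintype α] (hu : InBergmanFan M u) (hle : ∀ e, u e ≤ ω e)
    (e : α) : u e ≤ redRule M ω e :=
  le_redRule_of_forall_isCircuit (hle e) fun C hC he =>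
    let ⟨f, hf, huf⟩ := hu.exists_le_of_mem_isCircuit hC he
    calc u e ≤ u f := huf
      _ ≤ ω f := hle f
      _ ≤ sSup (ω '' (C \ {e})) :=
          le_csSup ((toFinite _).image ω).bddAbove (mem_image_of_mem ω hf)

end

theorem stmt5_general [Fintype α] (M : Matroid α) (ω usub : α → ℝ)
    (h1 : InBergmanFan M usub) (h2 : ∀ e, usub e ≤ ω e)
    (h3 : ∀ u : α → ℝ, InBergmanFan M u → (∀ e, u e ≤ ω e) → ∀ e, u e ≤ usub e) :
    ∀ e : α, usub e =
      sInf (insert (ω e)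
        {r : ℝ | ∃ C : Set α, IsCircuit M C ∧ e ∈ C ∧ r = sSup (ω '' (C \ {e}))}) := by
  have := h1.loopless
  intro e
  show usub e = redRule M ω e
  exact le_antisymm (h1.le_redRule h2 e)
    (h3 _ (inBergmanFan_redRule h1.ground_eq_univ) (fun _ => redRule_le_self) e)

/-- **red rule.** For a loopless matroid M and ω ∈ ℝ^E, the subdominant
M-ultrametric satisfies, for every e,
ω^M_e = min of {ω_e} ∪ { max_{f ∈ C \ {e}} ω_f : C a circuit of M containing e }. -/
theorem stmt5 [Fintype α] (M : Matroid α) (hE : M.E = Set.univ)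
    (hloopless : ∀ e : α, M.Indep {e}) (ω usub : α → ℝ)
    (h1 : InBergmanFan M usub) (h2 : ∀ e, usub e ≤ ω e)
    (h3 : ∀ u : α → ℝ, InBergmanFan M u → (∀ e, u e ≤ ω e) → ∀ e, u e ≤ usub e) :
    ∀ e : α, usub e =
      sInf (insert (ω e)
        {r : ℝ | ∃ C : Set α, IsCircuit M C ∧ e ∈ C ∧ r = sSup (ω '' (C \ {e}))}) :=
  stmt5_general M ω usub h1 h2 h3
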